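/- arXiv:1712.04422 — 5 statements merged into one kernel-verified Lean document; each statement's English description precedes it below -/
import Mathlib

section
/- Let f : ℝ² → Matrix (Fin n) (Fin n) ℝ and f₀ : ℝ² → (Fin n → ℝ) be C¹, and suppose H : ℝ²ⁿ → ℝⁿ is C¹ and satisfies Σⱼ fᵢⱼ(aᵢ,bᵢ) Hⱼ(a,b) = f₀ᵢ(aᵢ,bᵢ) for all i and all (a,b). Fix k and a point (a,b) where the (n−1)×n matrix (fᵢⱼ(aᵢ,bᵢ))_{i≠k, j} has rank n−1. Then the vectors (∂Hⱼ/∂aₖ)ⱼ and (∂Hⱼ/∂bₖ)ⱼ at (a,b) are linearly dependent, and hence ∂Hᵢ/∂aₖ ∂Hⱼ/∂bₖ − ∂Hⱼ/∂aₖ ∂Hᵢ/∂bₖ = 0 for all i,j. -/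
/-
For `i ≠ k`, moving `aₖ` or `bₖ` does not move the point `(aᵢ, bᵢ)` at which the `i`-th
equation is evaluated, so along such a line the `i`-th equation has constant coefficients and a
constant right-hand side. Differentiating it there shows that both `∂H/∂aₖ` and `∂H/∂bₖ` lie in
the kernel of the matrix with row `k` deleted; by rank–nullity that kernel has dimension at most
one, so the two vectors are dependent and all their `2 × 2` minors vanish.
-/

/-- Partial derivative with respect to `a_k`. -/
noncomputable def pa {n : ℕ} (f : (Fin n → ℝ) × (Fin n → ℝ) → ℝ) (k : Fin n)
    (x : (Fin n → ℝ) × (Fin n → ℝ)) : ℝ :=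
  fderiv ℝ f x (Pi.single k 1, 0)

/-- Partial derivative with respect to `b_k`. -/
noncomputable def pb {n : ℕ} (f : (Fin n → ℝ) × (Fin n → ℝ) → ℝ) (k : Fin n)
    (x : (Fin n → ℝ) × (Fin n → ℝ)) : ℝ :=
  fderiv ℝ f x (0, Pi.single k 1)

section LineDerivative

variable {𝕜 E F G : Type*} [NontriviallyNormedField 𝕜] [NormedAddCommGroup E] [NormedSpace 𝕜 E]
  [NormedAddCommGroup F] [NormedSpace 𝕜 F] [NormedAddCommGroup G] [NormedSpace 𝕜 G]

theorem fderiv_apply_eq_zero_of_forall_add_smul_eq {g : E → F} {x v : E}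
    (hg : DifferentiableAt 𝕜 g x) (hconst : ∀ t : 𝕜, g (x + t • v) = g x) :
    fderiv 𝕜 g x v = 0 := by
  rw [← hg.lineDeriv_eq_fderiv, lineDeriv, funext hconst, deriv_const]

theorem ContinuousLinearMap.map_fderiv_apply_eq_zero_of_forall_add_smul_eq (L : F →L[𝕜] G)
    {H : E → F} {x v : E} (hH : DifferentiableAt 𝕜 H x)
    (hconst : ∀ t : 𝕜, L (H (x + t • v)) = L (H x)) :
    L (fderiv 𝕜 H x v) = 0 := by
  have hLH : fderiv 𝕜 (fun y => L (H y)) x = L.comp (fderiv 𝕜 H x) :=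
    (L.hasFDerivAt.comp x hH.hasFDerivAt).fderiv
  rw [← ContinuousLinearMap.comp_apply, ← hLH]
  exact fderiv_apply_eq_zero_of_forall_add_smul_eq (L.differentiableAt.comp x hH) hconst

end LineDerivative

namespace Matrix

theorem not_linearIndependent_pair_of_mulVec_eq_zero {K m n : Type*} [Field K]
    [Fintype m] [Fintype n] (M : Matrix m n K) (hM : Fintype.card n ≤ M.rank + 1)
    {u v : n → K} (hu : M *ᵥ u = 0) (hv : M *ᵥ v = 0) :
    ¬LinearIndependent K ![u, v] := by
  intro huv
  have hker : Module.finrank K (LinearMap.ker M.mulVecLin) ≤ 1 := by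
    have := LinearMap.finrank_range_add_finrank_ker M.mulVecLin
    rw [Module.finrank_fintype_fun_eq_card] at this
    change M.rank + _ = _ at this
    omega
  have hspan : Submodule.span K (Set.range ![u, v]) ≤ LinearMap.ker M.mulVecLin := by
    simp [Submodule.span_le, Set.insert_subset_iff, hu, hv]
  have := Submodule.finrank_mono hspan
  rw [finrank_span_eq_card huv, Fintype.card_fin] at this
  omega

end Matrix

theorem mul_sub_mul_eq_zero_of_linear_relation {R : Type*} [CommRing R] [NoZeroDivisors R]
    {α β a b c d : R} (hαβ : ¬(α = 0 ∧ β = 0))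
    (hab : α * a + β * b = 0) (hcd : α * c + β * d = 0) :
    a * d - c * b = 0 := by
  have hα : α * (a * d - c * b) = 0 := by linear_combination d * hab - b * hcd
  have hβ : β * (a * d - c * b) = 0 := by linear_combination a * hcd - c * hab
  by_cases h : α = 0
  · exact (mul_eq_zero.mp hβ).resolve_left fun hβ => hαβ ⟨h, hβ⟩
  · exact (mul_eq_zero.mp hα).resolve_left h

open Matrix in
theorem mulVec_fderiv_eq_zero_of_sum_mul_eq {n : ℕ} (f : ℝ × ℝ → Fin n → Fin n → ℝ)
    (f₀ : ℝ × ℝ → Fin n → ℝ) {H : (Fin n → ℝ) × (Fin n → ℝ) → (Fin n → ℝ)}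
    (heq : ∀ i (x : (Fin n → ℝ) × (Fin n → ℝ)),
      ∑ j, f (x.1 i, x.2 i) i j * H x j = f₀ (x.1 i, x.2 i) i)
    {k : Fin n} {x w : (Fin n → ℝ) × (Fin n → ℝ)} (hH : DifferentiableAt ℝ H x)
    (hw : ∀ i ≠ k, w.1 i = 0 ∧ w.2 i = 0) :
    (Matrix.of fun (i : {i : Fin n // i ≠ k}) (j : Fin n) => f (x.1 i.1, x.2 i.1) i.1 j)
      *ᵥ fderiv ℝ H x w = 0 := by
  set M := Matrix.of fun (i : {i : Fin n // i ≠ k}) (j : Fin n) => f (x.1 i.1, x.2 i.1) i.1 j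
  refine M.mulVecLin.toContinuousLinearMap.map_fderiv_apply_eq_zero_of_forall_add_smul_eq hH ?_
  intro t
  funext i
  obtain ⟨hw₁, hw₂⟩ := hw i.1 i.2
  have hline : ((x + t • w).1 i.1, (x + t • w).2 i.1) = (x.1 i.1, x.2 i.1) := by
    simp [hw₁, hw₂]
  change ∑ j, M i j * H (x + t • w) j = ∑ j, M i j * H x j
  simp only [M, Matrix.of_apply]
  rw [← hline, heq, hline, heq]

theorem stmt9_general {n : ℕ} (f : ℝ × ℝ → Fin n → Fin n → ℝ) (f₀ : ℝ × ℝ → Fin n → ℝ)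
    (H : (Fin n → ℝ) × (Fin n → ℝ) → (Fin n → ℝ)) (hH : ContDiff ℝ 1 H)
    (heq : ∀ i (x : (Fin n → ℝ) × (Fin n → ℝ)),
      ∑ j, f (x.1 i, x.2 i) i j * H x j = f₀ (x.1 i, x.2 i) i)
    (k : Fin n) (x : (Fin n → ℝ) × (Fin n → ℝ))
    (hrank : (Matrix.of fun (i : {i : Fin n // i ≠ k}) (j : Fin n) =>
        f (x.1 i.1, x.2 i.1) i.1 j).rank = n - 1) :
    (∃ α β : ℝ, ¬(α = 0 ∧ β = 0) ∧ ∀ j : Fin n,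
      α * pa (fun y => H y j) k x + β * pb (fun y => H y j) k x = 0) ∧
    ∀ i j : Fin n,
      pa (fun y => H y i) k x * pb (fun y => H y j) k x
        - pa (fun y => H y j) k x * pb (fun y => H y i) k x = 0 := by
  have hHx : DifferentiableAt ℝ H x := hH.differentiable one_ne_zero x
  set u := fderiv ℝ H x (Pi.single k 1, 0)
  set v := fderiv ℝ H x (0, Pi.single k 1)
  have hpa : ∀ j, pa (fun y => H y j) k x = u j := by simp [pa, u, fderiv_apply hHx]
  have hpb : ∀ j, pb (fun y => H y j) k x = v j := by simp [pb, v, fderiv_apply hHx]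
  have hdep := Matrix.not_linearIndependent_pair_of_mulVec_eq_zero _
    (by rw [hrank, Fintype.card_fin]; omega)
    (mulVec_fderiv_eq_zero_of_sum_mul_eq f f₀ heq (w := (Pi.single k 1, 0)) hHx
      fun i hi => ⟨Pi.single_eq_of_ne hi 1, rfl⟩)
    (mulVec_fderiv_eq_zero_of_sum_mul_eq f f₀ heq (w := (0, Pi.single k 1)) hHx
      fun i hi => ⟨rfl, Pi.single_eq_of_ne hi 1⟩)
  rw [LinearIndependent.pair_iff] at hdep
  push Not at hdep
  obtain ⟨α, β, hrel, hαβ⟩ := hdep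
  have hrel_apply : ∀ j, α * u j + β * v j = 0 := fun j => by simpa using congrFun hrel j
  simp only [hpa, hpb]
  exact ⟨⟨α, β, not_and.mpr hαβ, hrel_apply⟩, fun i j =>
    mul_sub_mul_eq_zero_of_linear_relation (not_and.mpr hαβ) (hrel_apply i) (hrel_apply j)⟩

theorem stmt9 {n : ℕ} (f : ℝ × ℝ → Fin n → Fin n → ℝ) (f₀ : ℝ × ℝ → Fin n → ℝ)
    (hf : ContDiff ℝ 1 f) (hf₀ : ContDiff ℝ 1 f₀)
    (H : (Fin n → ℝ) × (Fin n → ℝ) → (Fin n → ℝ)) (hH : ContDiff ℝ 1 H)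
    (heq : ∀ i (x : (Fin n → ℝ) × (Fin n → ℝ)),
      ∑ j, f (x.1 i, x.2 i) i j * H x j = f₀ (x.1 i, x.2 i) i)
    (k : Fin n) (x : (Fin n → ℝ) × (Fin n → ℝ))
    (hrank : (Matrix.of fun (i : {i : Fin n // i ≠ k}) (j : Fin n) =>
        f (x.1 i.1, x.2 i.1) i.1 j).rank = n - 1) :
    (∃ α β : ℝ, ¬(α = 0 ∧ β = 0) ∧ ∀ j : Fin n,
      α * pa (fun y => H y j) k x + β * pb (fun y => H y j) k x = 0) ∧
    ∀ i j : Fin n,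
      pa (fun y => H y i) k x * pb (fun y => H y j) k x
        - pa (fun y => H y j) k x * pb (fun y => H y i) k x = 0 :=
  stmt9_general f f₀ H hH heq k x hrank
end

section
/- Fix exponents (p₁,q₁),…,(pₙ,qₙ) ∈ ℕ² and a polynomial f₀ ∈ ℝ[x,y]. Suppose H₁,…,Hₙ : ℝ²ⁿ → ℝ are C¹ functions such that for every i the plane curve Σⱼ Hⱼ(a,b)·x^{pⱼ} y^{qⱼ} = f₀(x,y) passes through the point (aᵢ,bᵢ), i.e. Σⱼ Hⱼ(a,b)·aᵢ^{pⱼ} bᵢ^{qⱼ} = f₀(aᵢ,bᵢ) for all (a,b). If at a point (a,b) for every k the (n−1)×n matrix (aᵢ^{pⱼ} bᵢ^{qⱼ})_{i≠k,j} has rank n−1, then all pairwise canonical Poisson brackets {Hᵢ,Hⱼ} = Σₖ (∂Hᵢ/∂aₖ ∂Hⱼ/∂bₖ − ∂Hⱼ/∂aₖ ∂Hᵢ/∂bₖ) vanish at that point. -/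
open Matrix

theorem Matrix.mul_eq_mul_of_mulVec_eq_zero_of_rank_eq {K m ι : Type*} [Field K] [Fintype ι]
    {A : Matrix m ι K} (hA : A.rank = Fintype.card ι - 1) {u v : ι → K}
    (hu : A *ᵥ u = 0) (hv : A *ᵥ v = 0) (i j : ι) : u i * v j = u j * v i := by
  have hker : Module.finrank K (LinearMap.ker A.mulVecLin) ≤ 1 := by
    have := LinearMap.finrank_range_add_finrank_ker A.mulVecLin
    rw [Module.finrank_fintype_fun_eq_card] at this
    change A.rank + _ = _ at this
    omega
  obtain ⟨w, hw⟩ := finrank_le_one_iff.mp hker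
  obtain ⟨a, ha⟩ := hw ⟨u, hu⟩
  obtain ⟨b, hb⟩ := hw ⟨v, hv⟩
  obtain rfl : a • (w : ι → K) = u := congrArg Subtype.val ha
  obtain rfl : b • (w : ι → K) = v := congrArg Subtype.val hb
  simp only [Pi.smul_apply, smul_eq_mul]
  ring

theorem HasFDerivAt.apply_eq_zero_of_forall_add_smul_eq {𝕜 E F : Type*}
    [NontriviallyNormedField 𝕜] [NormedAddCommGroup E] [NormedSpace 𝕜 E]
    [NormedAddCommGroup F] [NormedSpace 𝕜 F]
    {f : E → F} {f' : E →L[𝕜] F} {x v : E} (hf : HasFDerivAt f f' x)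
    (hconst : ∀ t : 𝕜, f (x + t • v) = f x) : f' v = 0 := by
  have hline : HasLineDerivAt 𝕜 f 0 x v := by
    unfold HasLineDerivAt
    simp only [hconst]
    exact hasDerivAt_const _ _
  exact (hf.hasLineDerivAt v).unique hline

section Interpolation

variable {n : ℕ} {ι : Type*} [Fintype ι] (φ : ι → ℝ → ℝ → ℝ) (F : ℝ → ℝ → ℝ)
  {H : ι → (Fin n → ℝ) × (Fin n → ℝ) → ℝ}

def interpolationMatrixErase (x : (Fin n → ℝ) × (Fin n → ℝ)) (k : Fin n) :
    Matrix {i : Fin n // i ≠ k} ι ℝ :=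
  Matrix.of fun i j => φ j (x.1 i) (x.2 i)

theorem sum_fderiv_mul_eq_zero_of_interpolates
    (heq : ∀ i x, ∑ j, H j x * φ j (x.1 i) (x.2 i) = F (x.1 i) (x.2 i))
    {x : (Fin n → ℝ) × (Fin n → ℝ)} (hH : ∀ j, DifferentiableAt ℝ (H j) x)
    {i : Fin n} {v : (Fin n → ℝ) × (Fin n → ℝ)} (hv₁ : v.1 i = 0) (hv₂ : v.2 i = 0) :
    ∑ j, φ j (x.1 i) (x.2 i) * fderiv ℝ (H j) x v = 0 := by
  have hderiv : HasFDerivAt (fun y => ∑ j, H j y * φ j (x.1 i) (x.2 i))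
      (∑ j, φ j (x.1 i) (x.2 i) • fderiv ℝ (H j) x) x :=
    HasFDerivAt.fun_sum fun j _ => (hH j).hasFDerivAt.mul_const _
  have hconst : ∀ t : ℝ, ∑ j, H j (x + t • v) * φ j (x.1 i) (x.2 i)
      = ∑ j, H j x * φ j (x.1 i) (x.2 i) := by
    intro t
    have hfix₁ : (x + t • v).1 i = x.1 i := by simp [hv₁]
    have hfix₂ : (x + t • v).2 i = x.2 i := by simp [hv₂]
    calc ∑ j, H j (x + t • v) * φ j (x.1 i) (x.2 i)
        = ∑ j, H j (x + t • v) * φ j ((x + t • v).1 i) ((x + t • v).2 i) := by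
          rw [hfix₁, hfix₂]
      _ = F (x.1 i) (x.2 i) := by rw [heq, hfix₁, hfix₂]
      _ = ∑ j, H j x * φ j (x.1 i) (x.2 i) := (heq i x).symm
  simpa using hderiv.apply_eq_zero_of_forall_add_smul_eq hconst

theorem interpolationMatrixErase_mulVec_fderiv_eq_zero
    (heq : ∀ i x, ∑ j, H j x * φ j (x.1 i) (x.2 i) = F (x.1 i) (x.2 i))
    {x : (Fin n → ℝ) × (Fin n → ℝ)} (hH : ∀ j, DifferentiableAt ℝ (H j) x)
    {k : Fin n} {v : (Fin n → ℝ) × (Fin n → ℝ)} (hv : ∀ i ≠ k, v.1 i = 0 ∧ v.2 i = 0) :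
    interpolationMatrixErase φ x k *ᵥ (fun j => fderiv ℝ (H j) x v) = 0 := by
  funext i
  simp only [Matrix.mulVec, dotProduct, interpolationMatrixErase, Matrix.of_apply,
    Pi.zero_apply]
  exact sum_fderiv_mul_eq_zero_of_interpolates φ F heq hH (hv i i.2).1 (hv i i.2).2

end Interpolation

theorem stmt12 {n : ℕ} (p q : Fin n → ℕ) (f₀ : MvPolynomial (Fin 2) ℝ)
    (H : Fin n → (Fin n → ℝ) × (Fin n → ℝ) → ℝ)
    (hH : ∀ j, ContDiff ℝ 1 (H j))
    (heq : ∀ i (x : (Fin n → ℝ) × (Fin n → ℝ)),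
      ∑ j, H j x * x.1 i ^ p j * x.2 i ^ q j = MvPolynomial.eval ![x.1 i, x.2 i] f₀)
    (x : (Fin n → ℝ) × (Fin n → ℝ))
    (hrank : ∀ k : Fin n, (Matrix.of fun (i : {i : Fin n // i ≠ k}) (j : Fin n) =>
        x.1 i.1 ^ p j * x.2 i.1 ^ q j).rank = n - 1) :
    ∀ i j, ∑ k, (pa (H i) k x * pb (H j) k x - pa (H j) k x * pb (H i) k x) = 0 := by
  intro i j
  refine Finset.sum_eq_zero fun k _ => sub_eq_zero.mpr ?_
  set φ : Fin n → ℝ → ℝ → ℝ := fun j a b => a ^ p j * b ^ q j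
  set F : ℝ → ℝ → ℝ := fun a b => MvPolynomial.eval ![a, b] f₀
  have hdiff : ∀ j, DifferentiableAt ℝ (H j) x :=
    fun j => ((hH j).differentiable one_ne_zero).differentiableAt
  have hinterp : ∀ i y, ∑ j, H j y * φ j (y.1 i) (y.2 i) = F (y.1 i) (y.2 i) := by
    intro i y
    simpa only [φ, mul_assoc] using heq i y
  have hrank' : (interpolationMatrixErase φ x k).rank = Fintype.card (Fin n) - 1 := by
    rw [Fintype.card_fin]
    exact hrank k
  have hsingle : ∀ i ≠ k, (Pi.single k 1 : Fin n → ℝ) i = 0 := fun i hi => Pi.single_eq_of_ne hi 1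
  exact Matrix.mul_eq_mul_of_mulVec_eq_zero_of_rank_eq hrank'
    (interpolationMatrixErase_mulVec_fderiv_eq_zero φ F hinterp hdiff (v := (Pi.single k 1, 0))
      fun i hi => ⟨hsingle i hi, rfl⟩)
    (interpolationMatrixErase_mulVec_fderiv_eq_zero φ F hinterp hdiff (v := (0, Pi.single k 1))
      fun i hi => ⟨rfl, hsingle i hi⟩) i j
end

section
/- With H(a,b) = V(a)⁻¹b the Lagrange interpolation coefficients (a₁,…,aₙ distinct), for each fixed k the vector ∂H/∂bₖ equals the k-th column of V(a)⁻¹, and the vector ∂H/∂aₖ equals −P'(aₖ) times that same column, where P is the interpolating polynomial; in particular ∂H/∂aₖ and ∂H/∂bₖ are proportional, with proportionality factor Mₖ = −P'(aₖ). -/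
/-
Cramer's rule writes the entries of `V(a)⁻¹` as polynomials in `a` divided by `det V(a)`, so
`H(a, b) = V(a)⁻¹ b` is differentiable wherever the nodes are distinct. Near such a point the
identity `∑ⱼ aᵢ ^ j * Hⱼ(a, b) = bᵢ` holds, and its `i`-th row involves only `(aᵢ, bᵢ)`.
Differentiating it in direction `(α, β)` gives `V(a) · DH(α, β) = β - α · P'(a)` componentwise,
and applying `V(a)⁻¹` to `β = eₖ` and to `α = eₖ` yields the two formulas.
-/

/-- The coefficient vector of the Lagrange interpolation polynomial through
`(a i, b i)`, as a function of `(a, b)`. -/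
noncomputable def lagCoeff {n : ℕ} (x : (Fin n → ℝ) × (Fin n → ℝ)) : Fin n → ℝ :=
  (Matrix.vandermonde x.1)⁻¹.mulVec x.2

open Matrix

section MatrixCalculus

variable {𝕜 E m : Type*} [NontriviallyNormedField 𝕜] [NormedAddCommGroup E] [NormedSpace 𝕜 E]
  [Fintype m] [DecidableEq m] {M : E → Matrix m m 𝕜}

theorem Differentiable.matrix_det (hM : ∀ i j, Differentiable 𝕜 fun y => M y i j) :
    Differentiable 𝕜 fun y => (M y).det := by
  simp only [det_apply, Units.smul_def]
  fun_prop

theorem Differentiable.matrix_adjugate_apply (hM : ∀ i j, Differentiable 𝕜 fun y => M y i j)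
    (i j : m) : Differentiable 𝕜 fun y => (M y).adjugate i j := by
  simp only [adjugate_apply]
  refine Differentiable.matrix_det fun p q => ?_
  rcases eq_or_ne p j with rfl | hp
  · simpa only [updateRow_self] using differentiable_const _
  · simpa only [updateRow_ne hp] using hM p q

theorem DifferentiableAt.matrix_inv_apply (hM : ∀ i j, Differentiable 𝕜 fun y => M y i j)
    {x : E} (hx : (M x).det ≠ 0) (i j : m) :
    DifferentiableAt 𝕜 (fun y => (M y)⁻¹ i j) x := by
  simp only [inv_def, Matrix.smul_apply, Ring.inverse_eq_inv', smul_eq_mul]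
  exact ((Differentiable.matrix_det hM x).inv hx).mul
    (Differentiable.matrix_adjugate_apply hM i j x)

end MatrixCalculus

section Lagrange

variable {n : ℕ} {x : (Fin n → ℝ) × (Fin n → ℝ)}

theorem differentiable_vandermonde_apply (i j : Fin n) :
    Differentiable ℝ fun y : (Fin n → ℝ) × (Fin n → ℝ) => vandermonde y.1 i j := by
  simp only [vandermonde_apply]
  fun_prop

theorem differentiableAt_lagCoeff (hx : (vandermonde x.1).det ≠ 0) (j : Fin n) :
    DifferentiableAt ℝ (fun y => lagCoeff y j) x := by
  simp only [lagCoeff, mulVec, dotProduct]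
  refine DifferentiableAt.fun_sum fun i _ => ?_
  exact (DifferentiableAt.matrix_inv_apply differentiable_vandermonde_apply hx j i).mul
    (by fun_prop)

theorem vandermonde_mulVec_lagCoeff (hx : (vandermonde x.1).det ≠ 0) :
    vandermonde x.1 *ᵥ lagCoeff x = x.2 := by
  rw [lagCoeff, mulVec_mulVec, mul_nonsing_inv _ (isUnit_iff_ne_zero.mpr hx), one_mulVec]

theorem eventuallyEq_vandermonde_mulVec_lagCoeff (hx : (vandermonde x.1).det ≠ 0) :
    (fun y => vandermonde y.1 *ᵥ lagCoeff y) =ᶠ[nhds x] Prod.snd := by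
  have hdet := (Differentiable.matrix_det (differentiable_vandermonde_apply (n := n))).continuous
    |>.continuousAt (x := x)
  filter_upwards [hdet.eventually_ne hx] with y hy using vandermonde_mulVec_lagCoeff hy

/-- `lagDeriv x` is `P'`, where `P = ∑ l, lagCoeff x l • X ^ l` interpolates the data `x`; the
truncated `l - 1` is harmless because its coefficient `l` vanishes at `l = 0`. -/
noncomputable def lagDeriv (x : (Fin n → ℝ) × (Fin n → ℝ)) (t : ℝ) : ℝ :=
  ∑ l : Fin n, (l : ℝ) * lagCoeff x l * t ^ ((l : ℕ) - 1)

theorem vandermonde_mulVec_fderiv_lagCoeff (hx : (vandermonde x.1).det ≠ 0)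
    (v : (Fin n → ℝ) × (Fin n → ℝ)) :
    vandermonde x.1 *ᵥ (fun j => fderiv ℝ (fun y => lagCoeff y j) x v)
      = v.2 - v.1 * (lagDeriv x ∘ x.1) := by
  ext i
  have hfst : HasFDerivAt (fun y : (Fin n → ℝ) × (Fin n → ℝ) => y.1 i)
      ((ContinuousLinearMap.proj i).comp (ContinuousLinearMap.fst ℝ _ _)) x :=
    hasFDerivAt_pi'.mp hasFDerivAt_fst i
  have hsnd : HasFDerivAt (fun y : (Fin n → ℝ) × (Fin n → ℝ) => y.2 i)
      ((ContinuousLinearMap.proj i).comp (ContinuousLinearMap.snd ℝ _ _)) x :=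
    hasFDerivAt_pi'.mp hasFDerivAt_snd i
  have hrow : HasFDerivAt (fun y => ∑ j : Fin n, y.1 i ^ (j : ℕ) * lagCoeff y j) _ x :=
    HasFDerivAt.fun_sum fun j _ =>
      (hfst.pow (j : ℕ)).mul (differentiableAt_lagCoeff hx j).hasFDerivAt
  have hrow_eq : (fun y => y.2 i) =ᶠ[nhds x]
      fun y => ∑ j : Fin n, y.1 i ^ (j : ℕ) * lagCoeff y j := by
    filter_upwards [eventuallyEq_vandermonde_mulVec_lagCoeff hx] with y hy
    simpa [mulVec, dotProduct] using (congrFun hy i).symm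
  have hv := congrArg (· v) (hsnd.unique (hrow.congr_of_eventuallyEq hrow_eq))
  simp only [ContinuousLinearMap.comp_apply, ContinuousLinearMap.coe_fst',
    ContinuousLinearMap.coe_snd', ContinuousLinearMap.proj_apply, nsmul_eq_mul, _root_.sum_apply,
    _root_.add_apply, _root_.smul_apply, smul_eq_mul, mulVec, dotProduct, vandermonde_apply,
    lagDeriv, Pi.sub_apply, Pi.mul_apply, Function.comp_apply] at hv ⊢
  rw [hv, Finset.sum_add_distrib, Finset.mul_sum, add_sub_assoc, ← Finset.sum_sub_distrib,
    left_eq_add]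
  exact Finset.sum_eq_zero fun l _ => by ring

theorem fderiv_lagCoeff_eq_inv_mulVec (hx : (vandermonde x.1).det ≠ 0)
    (v : (Fin n → ℝ) × (Fin n → ℝ)) :
    (fun j => fderiv ℝ (fun y => lagCoeff y j) x v)
      = (vandermonde x.1)⁻¹ *ᵥ (v.2 - v.1 * (lagDeriv x ∘ x.1)) := by
  rw [← vandermonde_mulVec_fderiv_lagCoeff hx, mulVec_mulVec,
    nonsing_inv_mul _ (isUnit_iff_ne_zero.mpr hx), one_mulVec]

theorem fderiv_lagCoeff_snd_single (hx : (vandermonde x.1).det ≠ 0) (k j : Fin n) :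
    fderiv ℝ (fun y => lagCoeff y j) x (0, Pi.single k 1) = (vandermonde x.1)⁻¹ j k := by
  rw [congrFun (fderiv_lagCoeff_eq_inv_mulVec hx _) j, zero_mul, sub_zero, mulVec_single_one,
    col_apply]

theorem fderiv_lagCoeff_fst_single (hx : (vandermonde x.1).det ≠ 0) (k j : Fin n) :
    fderiv ℝ (fun y => lagCoeff y j) x (Pi.single k 1, 0)
      = -lagDeriv x (x.1 k) * (vandermonde x.1)⁻¹ j k := by
  rw [congrFun (fderiv_lagCoeff_eq_inv_mulVec hx _) j, ← Pi.single_mul_left, zero_sub,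
    ← Pi.single_neg, mulVec_single]
  simp [mul_comm]

end Lagrange

theorem stmt15 {n : ℕ} (x : (Fin n → ℝ) × (Fin n → ℝ))
    (ha : Function.Injective x.1) (k : Fin n) :
    ∀ j : Fin n,
      fderiv ℝ (fun y => lagCoeff y j) x ((0 : Fin n → ℝ), Pi.single k 1)
        = (Matrix.vandermonde x.1)⁻¹ j k ∧
      fderiv ℝ (fun y => lagCoeff y j) x (Pi.single k 1, (0 : Fin n → ℝ))
        = -(∑ l : Fin n, (l : ℝ) * lagCoeff x l * x.1 k ^ ((l : ℕ) - 1))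
            * (Matrix.vandermonde x.1)⁻¹ j k := by
  have hx : (vandermonde x.1).det ≠ 0 := det_vandermonde_ne_zero_iff.mpr ha
  exact fun j => ⟨fderiv_lagCoeff_snd_single hx k j, fderiv_lagCoeff_fst_single hx k j⟩
end

section
/- Fix nonzero integer exponents m₁ < m₂ < … < mₙ (allowing negative values). For points (a₁,b₁),…,(aₙ,bₙ) with aᵢ nonzero and the generalized Vandermonde matrix (aᵢ^{mⱼ}) invertible, the coefficients H₁,…,Hₙ of the Laurent polynomial L(x) = Σⱼ Hⱼ x^{mⱼ} with L(aᵢ) = bᵢ, viewed as functions of (a,b), pairwise Poisson commute with respect to the canonical bracket on that open set. -/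
/-- Generalized Vandermonde matrix with integer exponents `m`. -/
noncomputable def genVandermonde {n : ℕ} (m : Fin n → ℤ) (a : Fin n → ℝ) :
    Matrix (Fin n) (Fin n) ℝ :=
  Matrix.of fun i j => a i ^ m j

/-- Coefficients of the interpolating Laurent polynomial `L(x) = ∑ⱼ Hⱼ x^{mⱼ}`. -/
noncomputable def laurentCoeff {n : ℕ} (m : Fin n → ℤ)
    (x : (Fin n → ℝ) × (Fin n → ℝ)) : Fin n → ℝ :=
  (genVandermonde m x.1)⁻¹.mulVec x.2

/-!
Write `V(a) = (f_j(a_i))` for the collocation matrix of the basis functions `f_j = x^{m_j}`,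
so that `H = V(a)⁻¹ b`. Differentiating `V(a) H = b` gives `∂H/∂b_k = V⁻¹ e_k` and, since only
row `k` of `V` depends on `a_k`, `∂H/∂a_k = -L'(a_k) V⁻¹ e_k`, where `L = ∑_j H_j f_j` is the
interpolant. Hence `{H_i, H_j} = ∑_k L'(a_k) (-(V⁻¹)_{ik} (V⁻¹)_{jk} + (V⁻¹)_{jk} (V⁻¹)_{ik}) = 0`.
This works for any family of differentiable `f_j`.
-/

open Matrix

theorem DifferentiableAt.matrix_det {𝕜 E ι : Type*} [NontriviallyNormedField 𝕜]
    [NormedAddCommGroup E] [NormedSpace 𝕜 E] [Fintype ι] [DecidableEq ι]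
    {M : E → Matrix ι ι 𝕜} {x : E}
    (hM : ∀ i j, DifferentiableAt 𝕜 (fun e => M e i j) x) :
    DifferentiableAt 𝕜 (fun e => (M e).det) x := by
  simp only [det_apply']
  fun_prop

section Interpolation

variable {n : ℕ}

noncomputable def interpMatrix (f : Fin n → ℝ → ℝ) (a : Fin n → ℝ) :
    Matrix (Fin n) (Fin n) ℝ :=
  Matrix.of fun i j => f j (a i)

noncomputable def interpCoeff (f : Fin n → ℝ → ℝ) (x : (Fin n → ℝ) × (Fin n → ℝ)) :
    Fin n → ℝ :=
  (interpMatrix f x.1)⁻¹ *ᵥ x.2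

noncomputable def poissonBracket (F G : (Fin n → ℝ) × (Fin n → ℝ) → ℝ)
    (x : (Fin n → ℝ) × (Fin n → ℝ)) : ℝ :=
  ∑ k, (pa F k x * pb G k x - pa G k x * pb F k x)

variable {f : Fin n → ℝ → ℝ} {x : (Fin n → ℝ) × (Fin n → ℝ)}

theorem interpCoeff_apply_eq_cramer (y : (Fin n → ℝ) × (Fin n → ℝ)) (p : Fin n) :
    interpCoeff f y p =
      ((interpMatrix f y.1).det)⁻¹ * ((interpMatrix f y.1).updateCol p y.2).det := by
  rw [interpCoeff, inv_def, Ring.inverse_eq_inv', smul_mulVec, ← cramer_eq_adjugate_mulVec,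
    Pi.smul_apply, cramer_apply, smul_eq_mul]

theorem differentiableAt_interpMatrix_apply (hf : ∀ i j, DifferentiableAt ℝ (f j) (x.1 i))
    (i j : Fin n) :
    DifferentiableAt ℝ (fun y : (Fin n → ℝ) × (Fin n → ℝ) => interpMatrix f y.1 i j) x :=
  (hf i j).comp x (f := fun y => y.1 i) (by fun_prop)

theorem differentiableAt_interpCoeff (hf : ∀ i j, DifferentiableAt ℝ (f j) (x.1 i))
    (hdet : (interpMatrix f x.1).det ≠ 0) (p : Fin n) :
    DifferentiableAt ℝ (fun y => interpCoeff f y p) x := by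
  have hV := differentiableAt_interpMatrix_apply hf
  simp_rw [interpCoeff_apply_eq_cramer]
  refine ((DifferentiableAt.matrix_det hV).inv hdet).mul
    (DifferentiableAt.matrix_det fun i j => ?_)
  by_cases hj : j = p
  · subst hj
    simp only [updateCol_self]
    fun_prop
  · simpa [updateCol_ne hj] using hV i j

theorem eventually_interpMatrix_mulVec_interpCoeff
    (hf : ∀ i j, DifferentiableAt ℝ (f j) (x.1 i)) (hdet : (interpMatrix f x.1).det ≠ 0) :
    ∀ᶠ y in nhds x, interpMatrix f y.1 *ᵥ interpCoeff f y = y.2 := by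
  have hcont :=
    (DifferentiableAt.matrix_det (differentiableAt_interpMatrix_apply hf)).continuousAt
  filter_upwards [hcont.eventually_ne hdet] with y hy
  rw [interpCoeff, mulVec_mulVec, mul_nonsing_inv _ (isUnit_iff_ne_zero.mpr hy), one_mulVec]

/-- `L'(a_r)`, where `L = ∑_q H_q f_q` is the interpolant at `x = (a, b)`. -/
noncomputable def interpDeriv (f : Fin n → ℝ → ℝ) (x : (Fin n → ℝ) × (Fin n → ℝ)) (r : Fin n) :
    ℝ :=
  ∑ q, deriv (f q) (x.1 r) * interpCoeff f x q

open ContinuousLinearMap in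
theorem interpMatrix_mulVec_fderiv_interpCoeff (hf : ∀ i j, DifferentiableAt ℝ (f j) (x.1 i))
    (hdet : (interpMatrix f x.1).det ≠ 0) (v : (Fin n → ℝ) × (Fin n → ℝ)) :
    interpMatrix f x.1 *ᵥ (fun p => fderiv ℝ (fun y => interpCoeff f y p) x v)
      = v.2 - v.1 * interpDeriv f x := by
  ext r
  let πa : (Fin n → ℝ) × (Fin n → ℝ) →L[ℝ] ℝ := (proj r).comp (fst ℝ _ _)
  let πb : (Fin n → ℝ) × (Fin n → ℝ) →L[ℝ] ℝ := (proj r).comp (snd ℝ _ _)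
  have hsum : HasFDerivAt (fun y => ∑ q, f q (y.1 r) * interpCoeff f y q)
      (∑ q, (f q (x.1 r) • fderiv ℝ (fun y => interpCoeff f y q) x
        + interpCoeff f x q • deriv (f q) (x.1 r) • πa)) x :=
    HasFDerivAt.fun_sum fun q _ =>
      ((hf r q).hasDerivAt.comp_hasFDerivAt x πa.hasFDerivAt).mul
        (differentiableAt_interpCoeff hf hdet q).hasFDerivAt
  have hb : HasFDerivAt (fun y => ∑ q, f q (y.1 r) * interpCoeff f y q) πb x := by
    refine πb.hasFDerivAt.congr_of_eventuallyEq ?_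
    filter_upwards [eventually_interpMatrix_mulVec_interpCoeff hf hdet] with y hy
    exact congrFun hy r
  have hv := congrArg (· v) (hsum.unique hb)
  simp only [Finset.sum_add_distrib, _root_.add_apply, _root_.sum_apply, _root_.smul_apply,
    smul_eq_mul, πa, πb, ContinuousLinearMap.comp_apply, coe_fst', coe_snd', proj_apply] at hv
  simp only [mulVec, dotProduct, interpMatrix, of_apply, Pi.sub_apply, Pi.mul_apply, interpDeriv]
  rw [← hv, Finset.mul_sum, add_sub_assoc, ← Finset.sum_sub_distrib, left_eq_add]
  exact Finset.sum_eq_zero fun q _ => by ring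

theorem fderiv_interpCoeff_apply (hf : ∀ i j, DifferentiableAt ℝ (f j) (x.1 i))
    (hdet : (interpMatrix f x.1).det ≠ 0) (v : (Fin n → ℝ) × (Fin n → ℝ)) (p : Fin n) :
    fderiv ℝ (fun y => interpCoeff f y p) x v
      = ((interpMatrix f x.1)⁻¹ *ᵥ (v.2 - v.1 * interpDeriv f x)) p := by
  rw [← interpMatrix_mulVec_fderiv_interpCoeff hf hdet, mulVec_mulVec,
    nonsing_inv_mul _ (isUnit_iff_ne_zero.mpr hdet), one_mulVec]

theorem pa_interpCoeff (hf : ∀ i j, DifferentiableAt ℝ (f j) (x.1 i))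
    (hdet : (interpMatrix f x.1).det ≠ 0) (p k : Fin n) :
    pa (fun y => interpCoeff f y p) k x =
      -((interpMatrix f x.1)⁻¹ p k * interpDeriv f x k) := by
  rw [pa, fderiv_interpCoeff_apply hf hdet]
  simp [mulVec, dotProduct, Pi.single_apply]

theorem pb_interpCoeff (hf : ∀ i j, DifferentiableAt ℝ (f j) (x.1 i))
    (hdet : (interpMatrix f x.1).det ≠ 0) (p k : Fin n) :
    pb (fun y => interpCoeff f y p) k x = (interpMatrix f x.1)⁻¹ p k := by
  rw [pb, fderiv_interpCoeff_apply hf hdet]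
  simp [mulVec, dotProduct, Pi.single_apply]

theorem poissonBracket_interpCoeff (hf : ∀ i j, DifferentiableAt ℝ (f j) (x.1 i))
    (hdet : (interpMatrix f x.1).det ≠ 0) (p q : Fin n) :
    poissonBracket (fun y => interpCoeff f y p) (fun y => interpCoeff f y q) x = 0 := by
  refine Finset.sum_eq_zero fun k _ => ?_
  simp only [pa_interpCoeff hf hdet, pb_interpCoeff hf hdet]
  ring

end Interpolation

theorem stmt17_general {n : ℕ} (m : Fin n → ℤ) :
    ∀ x : (Fin n → ℝ) × (Fin n → ℝ), (∀ i, x.1 i ≠ 0) →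
      IsUnit (genVandermonde m x.1).det →
      ∀ i j : Fin n,
        ∑ k, (pa (fun y => laurentCoeff m y i) k x * pb (fun y => laurentCoeff m y j) k x
          - pa (fun y => laurentCoeff m y j) k x * pb (fun y => laurentCoeff m y i) k x) = 0 :=
  fun _ hx hdet i j => poissonBracket_interpCoeff (f := fun j t => t ^ m j)
    (fun i _ => differentiableAt_zpow.2 (Or.inl (hx i))) hdet.ne_zero i j

theorem stmt17 {n : ℕ} (m : Fin n → ℤ) (hm : StrictMono m) (hm0 : ∀ j, m j ≠ 0) :
    ∀ x : (Fin n → ℝ) × (Fin n → ℝ), (∀ i, x.1 i ≠ 0) →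
      IsUnit (genVandermonde m x.1).det →
      ∀ i j : Fin n,
        ∑ k, (pa (fun y => laurentCoeff m y i) k x * pb (fun y => laurentCoeff m y j) k x
          - pa (fun y => laurentCoeff m y j) k x * pb (fun y => laurentCoeff m y i) k x) = 0 :=
  stmt17_general m
end

section
/- Let F : ℝⁿ × ℝ² → ℝ per index, i.e. F₁,…,Fₙ C¹ functions with Fᵢ depending on (H,aᵢ,bᵢ), and H : U → ℝⁿ a C¹ solution of Fᵢ(H(a,b),aᵢ,bᵢ) = 0 on an open U ⊆ ℝ²ⁿ. Fix k and suppose at a point of U there is j_k with the (n−1)×(n−1) matrix (∂Fᵢ/∂Hⱼ)_{i≠k, j≠j_k} invertible. Then there exist scalars A_j (j = 1,…,n, with A_{j_k} = 1) such that ∂Hⱼ/∂aₖ = A_j · ∂H_{j_k}/∂aₖ and ∂Hⱼ/∂bₖ = A_j · ∂H_{j_k}/∂bₖ for all j at that point. -/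
open Topology Matrix

namespace Matrix

variable {ι κ K : Type*} [Fintype κ] [DecidableEq κ]

theorem mulVec_eq_mul_col_add_mulVec_submatrix_ne [NonUnitalNonAssocSemiring K]
    (D : Matrix ι κ K) (j₀ : κ) (v : κ → K) :
    D *ᵥ v = (fun i => D i j₀ * v j₀) +
      D.submatrix id (Subtype.val : {j // j ≠ j₀} → κ) *ᵥ fun j => v j := by
  ext i
  simp [mulVec, dotProduct, Fintype.sum_eq_add_sum_subtype_ne _ j₀]

theorem exists_eq_smul_of_mulVec_eq_zero_of_bijective_submatrix [CommRing K]
    (D : Matrix ι κ K) (j₀ : κ) (hD : Function.Bijective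
      (D.submatrix id (Subtype.val : {j // j ≠ j₀} → κ)).mulVecLin) :
    ∃ A : κ → K, A j₀ = 1 ∧ ∀ u : κ → K, D *ᵥ u = 0 → u = u j₀ • A := by
  obtain ⟨w, hw⟩ := hD.2 fun i => -D i j₀
  set A : κ → K := fun j => if h : j = j₀ then 1 else w ⟨j, h⟩
  have hA : A j₀ = 1 := dif_pos rfl
  have hAw : (fun j : {j // j ≠ j₀} => A j) = w := funext fun j => dif_neg j.2
  have hDA : D *ᵥ A = 0 := by
    rw [mulVec_eq_mul_col_add_mulVec_submatrix_ne D j₀, hA, hAw]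
    have hw' : D.submatrix id Subtype.val *ᵥ w = fun i => -D i j₀ := hw
    ext i
    simp [hw']
  refine ⟨A, hA, fun u hu => ?_⟩
  set v := u - u j₀ • A
  have hv : v j₀ = 0 := by simp [v, hA]
  have hDv : D *ᵥ v = 0 := by simp [v, mulVec_sub, mulVec_smul, hu, hDA]
  have hv' : (fun j : {j // j ≠ j₀} => v j) = 0 := hD.1 <| by
    rw [map_zero]
    simpa [mulVec_eq_mul_col_add_mulVec_submatrix_ne D j₀ v, hv, ← Pi.zero_def] using hDv
  refine sub_eq_zero.1 (funext fun j => ?_)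
  by_cases h : j = j₀
  · rw [h]; exact hv
  · exact congrFun hv' ⟨j, h⟩

end Matrix

section Implicit

variable {𝕜 E F G M : Type*} [NontriviallyNormedField 𝕜]
  [NormedAddCommGroup E] [NormedSpace 𝕜 E] [NormedAddCommGroup F] [NormedSpace 𝕜 F]
  [NormedAddCommGroup G] [NormedSpace 𝕜 G] [NormedAddCommGroup M] [NormedSpace 𝕜 M]

theorem fderiv_apply_fderiv_eq_zero_of_comp_eventuallyEq_const {f : E → F} {g : F → G} {x : E}
    {c : G} (hg : DifferentiableAt 𝕜 g (f x)) (hf : DifferentiableAt 𝕜 f x)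
    (hgf : g ∘ f =ᶠ[𝓝 x] fun _ => c) (d : E) :
    fderiv 𝕜 g (f x) (fderiv 𝕜 f x d) = 0 := by
  have := (hg.hasFDerivAt.comp x hf.hasFDerivAt).unique
    ((hasFDerivAt_const c x).congr_of_eventuallyEq hgf)
  exact congr($this d)

theorem ContinuousLinearMap.apply_prod_zero_eq_sum {ι : Type*} [Fintype ι] [DecidableEq ι]
    (L : (ι → 𝕜) × G →L[𝕜] M) (v : ι → 𝕜) :
    L (v, 0) = ∑ j, v j • L (Pi.single j 1, 0) := by
  have hv : (v, (0 : G)) = ∑ j, v j • ((Pi.single j 1 : ι → 𝕜), (0 : G)) := by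
    ext j <;> simp [Prod.fst_sum, Prod.snd_sum, Finset.sum_apply, Pi.single_apply]
  simp only [hv, map_sum, map_smul]

theorem sum_fderiv_mul_fderiv_eq_zero_of_eventually_eq_zero {ι : Type*} [Fintype ι] [DecidableEq ι]
    {f : (ι → 𝕜) × G → 𝕜} {h : E → ι → 𝕜} (α : E →L[𝕜] G) {x : E}
    (hf : DifferentiableAt 𝕜 f (h x, α x)) (hh : DifferentiableAt 𝕜 h x)
    (heq : ∀ᶠ y in 𝓝 x, f (h y, α y) = 0) {d : E} (hd : α d = 0) :
    ∑ j, fderiv 𝕜 f (h x, α x) (Pi.single j 1, 0) * fderiv 𝕜 h x d j = 0 := by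
  have hφ : HasFDerivAt (fun y => (h y, α y)) ((fderiv 𝕜 h x).prod α) x :=
    hh.hasFDerivAt.prodMk α.hasFDerivAt
  have := fderiv_apply_fderiv_eq_zero_of_comp_eventuallyEq_const (f := fun y => (h y, α y))
    hf hφ.differentiableAt heq d
  rw [hφ.fderiv, ContinuousLinearMap.prod_apply, hd,
    ContinuousLinearMap.apply_prod_zero_eq_sum] at this
  simpa only [smul_eq_mul, mul_comm] using this

end Implicit

theorem stmt18 {n : ℕ} (F : Fin n → (Fin n → ℝ) × ℝ × ℝ → ℝ)
    (hF : ∀ i, ContDiff ℝ 1 (F i))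
    (U : Set ((Fin n → ℝ) × (Fin n → ℝ))) (hU : IsOpen U)
    (H : (Fin n → ℝ) × (Fin n → ℝ) → (Fin n → ℝ)) (hH : ContDiff ℝ 1 H)
    (heq : ∀ i, ∀ x ∈ U, F i (H x, x.1 i, x.2 i) = 0)
    (k : Fin n) (x : (Fin n → ℝ) × (Fin n → ℝ)) (hx : x ∈ U) (jk : Fin n)
    (hinv : Function.Bijective
      (Matrix.mulVecLin (Matrix.of fun (i : {i : Fin n // i ≠ k}) (j : {j : Fin n // j ≠ jk}) =>
        fderiv ℝ (F i.1) (H x, x.1 i.1, x.2 i.1) (Pi.single j.1 1, 0, 0)))) :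
    ∃ A : Fin n → ℝ, A jk = 1 ∧ ∀ j : Fin n,
      pa (fun y => H y j) k x = A j * pa (fun y => H y jk) k x ∧
      pb (fun y => H y j) k x = A j * pb (fun y => H y jk) k x := by
  set D : Matrix {i : Fin n // i ≠ k} (Fin n) ℝ :=
    Matrix.of fun i j => fderiv ℝ (F i.1) (H x, x.1 i.1, x.2 i.1) (Pi.single j 1, 0)
  obtain ⟨A, hA, hker⟩ := D.exists_eq_smul_of_mulVec_eq_zero_of_bijective_submatrix jk hinv
  have hHx : DifferentiableAt ℝ H x := hH.differentiable one_ne_zero x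
  let ab (i : Fin n) : (Fin n → ℝ) × (Fin n → ℝ) →L[ℝ] ℝ × ℝ :=
    ((ContinuousLinearMap.proj i).comp (.fst ℝ _ _)).prod
      ((ContinuousLinearMap.proj i).comp (.snd ℝ _ _))
  have hker_mem : ∀ d : (Fin n → ℝ) × (Fin n → ℝ), (∀ i ≠ k, d.1 i = 0 ∧ d.2 i = 0) →
      D *ᵥ fderiv ℝ H x d = 0 := by
    intro d hd
    ext i
    refine sum_fderiv_mul_fderiv_eq_zero_of_eventually_eq_zero (ab i) ?_ hHx ?_ ?_
    · exact (hF i).differentiable one_ne_zero _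
    · filter_upwards [hU.mem_nhds hx] with y hy using heq i y hy
    · simp [ab, (hd i i.2).1, (hd i i.2).2]
  have hpartial : ∀ d : (Fin n → ℝ) × (Fin n → ℝ), (∀ i ≠ k, d.1 i = 0 ∧ d.2 i = 0) →
      ∀ j, fderiv ℝ (fun y => H y j) x d = A j * fderiv ℝ (fun y => H y jk) x d := by
    intro d hd j
    simp only [fderiv_apply hHx, ContinuousLinearMap.comp_apply, ContinuousLinearMap.proj_apply]
    rw [congrFun (hker _ (hker_mem d hd)) j, Pi.smul_apply, smul_eq_mul, mul_comm]
  refine ⟨A, hA, fun j => ⟨hpartial _ ?_ j, hpartial _ ?_ j⟩⟩ <;>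
    intro i hi <;> simp [Pi.single_eq_of_ne hi]
end
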